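/- Let V be a real inner product space, let u, v, q be unit vectors in V with q in the span of u and v, let ξ ∈ [0, π/2], and suppose the (undirected) angle between u and v equals π/2 + ξ or π/2 − ξ. Then |cos²(angle(q, u)) + cos²(angle(q, v)) − 1| ≤ sin ξ, where angle(·,·) denotes the undirected angle between two vectors. -/

import Mathlib

/-!
Write `q = a • u + b • v` and `c = ⟪u, v⟫`. For unit vectors the cosines of the angles are the
inner products `a + b c` and `b + a c`, and `‖q‖ = 1` reads `a² + b² + 2abc = 1`. Under that
constraint the deviation `(a + bc)² + (b + ac)² - 1` equals `c (a + b)² (1 + c) - c` and also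
`c - c (a - b)² (1 - c)`, so it lies between `-|c|` and `|c|`; finally
`|c| = |cos (π/2 ± ξ)| = sin ξ`.
-/

open InnerProductGeometry Real
open RealInnerProductSpace

theorem abs_sq_add_sq_sub_one_le_abs {a b c : ℝ} (hnorm : a ^ 2 + b ^ 2 + 2 * a * b * c = 1)
    (hc : |c| ≤ 1) : |(a + b * c) ^ 2 + (b + a * c) ^ 2 - 1| ≤ |c| := by
  obtain ⟨hc_lower, hc_upper⟩ := abs_le.mp hc
  have h_plus : (a + b * c) ^ 2 + (b + a * c) ^ 2 - 1 = c * ((a + b) ^ 2 * (1 + c)) - c := by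
    linear_combination (1 - c) * hnorm
  have h_minus : (a + b * c) ^ 2 + (b + a * c) ^ 2 - 1 = c - c * ((a - b) ^ 2 * (1 - c)) := by
    linear_combination (1 + c) * hnorm
  have h_plus_nonneg : 0 ≤ (a + b) ^ 2 * (1 + c) := mul_nonneg (sq_nonneg _) (by linarith)
  have h_minus_nonneg : 0 ≤ (a - b) ^ 2 * (1 - c) := mul_nonneg (sq_nonneg _) (by linarith)
  rw [abs_le]
  rcases le_or_gt 0 c with hc0 | hc0
  · rw [abs_of_nonneg hc0]
    constructor
    · rw [h_plus]; linarith [mul_nonneg hc0 h_plus_nonneg]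
    · rw [h_minus]; linarith [mul_nonneg hc0 h_minus_nonneg]
  · rw [abs_of_neg hc0]
    constructor
    · rw [h_minus]; linarith [mul_nonneg (neg_nonneg.mpr hc0.le) h_minus_nonneg]
    · rw [h_plus]; linarith [mul_nonneg (neg_nonneg.mpr hc0.le) h_plus_nonneg]

section InnerProductSpace

variable {V : Type*} [NormedAddCommGroup V] [InnerProductSpace ℝ V]

theorem abs_inner_sq_add_inner_sq_sub_one_le {u v q : V} (hu : ‖u‖ = 1) (hv : ‖v‖ = 1)
    (hq : ‖q‖ = 1) (hspan : q ∈ Submodule.span ℝ ({u, v} : Set V)) :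
    |⟪q, u⟫ ^ 2 + ⟪q, v⟫ ^ 2 - 1| ≤ |⟪u, v⟫| := by
  obtain ⟨a, b, rfl⟩ := Submodule.mem_span_pair.mp hspan
  have huu : ⟪u, u⟫ = 1 := by rw [real_inner_self_eq_norm_sq, hu, one_pow]
  have hvv : ⟪v, v⟫ = 1 := by rw [real_inner_self_eq_norm_sq, hv, one_pow]
  have hqq : ⟪a • u + b • v, a • u + b • v⟫ = 1 := by rw [real_inner_self_eq_norm_sq, hq, one_pow]
  simp only [inner_add_left, inner_add_right, real_inner_smul_left, real_inner_smul_right,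
    huu, hvv, real_inner_comm u v] at hqq ⊢
  have hnorm : a ^ 2 + b ^ 2 + 2 * a * b * ⟪u, v⟫ = 1 := by linear_combination hqq
  have hc : |⟪u, v⟫| ≤ 1 := by
    simpa [hu, hv] using abs_real_inner_le_norm u v
  convert abs_sq_add_sq_sub_one_le_abs hnorm hc using 4 <;> ring

end InnerProductSpace

theorem abs_cos_eq_sin_of_eq_pi_div_two_add_or_sub {θ ξ : ℝ} (hξ₀ : 0 ≤ ξ) (hξπ : ξ ≤ π)
    (hθ : θ = π / 2 + ξ ∨ θ = π / 2 - ξ) : |cos θ| = sin ξ := by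
  rw [← abs_of_nonneg (sin_nonneg_of_nonneg_of_le_pi hξ₀ hξπ)]
  rcases hθ with rfl | rfl
  · rw [add_comm, cos_add_pi_div_two, abs_neg]
  · rw [cos_pi_div_two_sub]

/-- Angle-form of Theorem 1: if the undirected angle between unit vectors
`u` and `v` equals `π/2 + ξ` or `π/2 - ξ` with `ξ ∈ [0, π/2]`, then for any
unit vector `q` in the span of `u` and `v`, the total squared-cosine
contribution deviates from `1` by at most `sin ξ`. -/
theorem angle_form_outlier_suppression
    {V : Type*} [NormedAddCommGroup V] [InnerProductSpace ℝ V]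
    (u v q : V) (hu : ‖u‖ = 1) (hv : ‖v‖ = 1) (hq : ‖q‖ = 1)
    (hspan : q ∈ Submodule.span ℝ ({u, v} : Set V))
    (ξ : ℝ) (hξ : ξ ∈ Set.Icc 0 (π / 2))
    (hangle : angle u v = π / 2 + ξ ∨ angle u v = π / 2 - ξ) :
    |Real.cos (angle q u) ^ 2 + Real.cos (angle q v) ^ 2 - 1| ≤ Real.sin ξ := by
  have hsin : |⟪u, v⟫| = sin ξ := by
    rw [inner_eq_cos_angle_of_norm_eq_one hu hv]
    exact abs_cos_eq_sin_of_eq_pi_div_two_add_or_sub hξ.1 (by linarith [hξ.2, pi_pos]) hangle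
  rw [← inner_eq_cos_angle_of_norm_eq_one hq hu, ← inner_eq_cos_angle_of_norm_eq_one hq hv, ← hsin]
  exact abs_inner_sq_add_inner_sq_sub_one_le hu hv hq hspan
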